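/- Let 0<q<1 and let {P_n}_{n≥0} be a sequence of monic real polynomials, deg P_n = n, orthogonal with respect to a weight function w positive on an open interval (a,b) ⊆ (−1,1). Suppose there exist real sequences (a'_n), (b'_n), (c_n) such that for all n ≥ 2, (1/γ_{n+1})·(D_q P_{n+1})(x) = (x − a'_n)·(1/γ_n)·(D_q P_n)(x) − (b'_n/γ_{n−1})·(D_q P_{n−1})(x) + c_n as an identity of polynomials. Then c_n = 0 for all n ≥ 5. -/

import Mathlib

set_option autoImplicit false

open Polynomial MeasureTheory

/-- `γ_n = (q^{n/2} - q^{-n/2})/(q^{1/2} - q^{-1/2})`. -/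
noncomputable def gammaAW (q : ℝ) (n : ℕ) : ℝ :=
  ((Real.sqrt q) ^ n - ((Real.sqrt q)⁻¹) ^ n) / (Real.sqrt q - (Real.sqrt q)⁻¹)

/-- `g` is the Askey–Wilson divided difference `D_q f`. -/
def IsAWDq (q : ℝ) (f g : Polynomial ℝ) : Prop :=
  ∀ z : ℝ, z ≠ 0 → z ^ 2 ≠ 1 →
    g.eval ((z + z⁻¹) / 2) =
      (f.eval ((Real.sqrt q * z + (Real.sqrt q)⁻¹ * z⁻¹) / 2) -
          f.eval (((Real.sqrt q)⁻¹ * z + Real.sqrt q * z⁻¹) / 2)) /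
        ((Real.sqrt q - (Real.sqrt q)⁻¹) * (z - z⁻¹) / 2)

/-- The Askey–Wilson operator `D_q` on polynomials. -/
noncomputable def awDq (q : ℝ) (f : Polynomial ℝ) : Polynomial ℝ :=
  letI := Classical.propDecidable (∃ g, IsAWDq q f g)
  if h : ∃ g, IsAWDq q f g then h.choose else 0

/-- `g` is the Askey–Wilson average `S_q f`. -/
def IsAWSq (q : ℝ) (f g : Polynomial ℝ) : Prop :=
  ∀ z : ℝ, z ≠ 0 → z ^ 2 ≠ 1 →
    g.eval ((z + z⁻¹) / 2) =
      (f.eval ((Real.sqrt q * z + (Real.sqrt q)⁻¹ * z⁻¹) / 2) +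
          f.eval (((Real.sqrt q)⁻¹ * z + Real.sqrt q * z⁻¹) / 2)) / 2

/-- The Askey–Wilson averaging operator `S_q` on polynomials. -/
noncomputable def awSq (q : ℝ) (f : Polynomial ℝ) : Polynomial ℝ :=
  letI := Classical.propDecidable (∃ g, IsAWSq q f g)
  if h : ∃ g, IsAWSq q f g then h.choose else 0

namespace AWAux

noncomputable def sigmaAW (q : ℝ) (n : ℕ) : ℝ :=
  ((Real.sqrt q) ^ n + ((Real.sqrt q)⁻¹) ^ n) / 2

section basic
variable {q : ℝ}

lemma rs_pos (hq0 : 0 < q) : 0 < Real.sqrt q := Real.sqrt_pos.mpr hq0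

lemma rs_lt_one (hq0 : 0 < q) (hq1 : q < 1) : Real.sqrt q < 1 := by
  rw [show (1:ℝ) = Real.sqrt 1 by simp]
  exact Real.sqrt_lt_sqrt (le_of_lt hq0) hq1

lemma rs_ne (hq0 : 0 < q) : Real.sqrt q ≠ 0 := ne_of_gt (rs_pos hq0)

lemma rs_inv_gt (hq0 : 0 < q) (hq1 : q < 1) : 1 < (Real.sqrt q)⁻¹ := by
  have h1 := rs_lt_one hq0 hq1
  have h2 := rs_pos hq0
  exact (one_lt_inv₀ h2).mpr h1

lemma rs_sub_inv_ne (hq0 : 0 < q) (hq1 : q < 1) :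
    Real.sqrt q - (Real.sqrt q)⁻¹ ≠ 0 := by
  have h1 := rs_lt_one hq0 hq1
  have h3 := rs_inv_gt hq0 hq1
  intro h; nlinarith

lemma gammaAW_mul_den (hq0 : 0 < q) (hq1 : q < 1) (n : ℕ) :
    gammaAW q n * (Real.sqrt q - (Real.sqrt q)⁻¹)
      = (Real.sqrt q) ^ n - ((Real.sqrt q)⁻¹) ^ n := by
  rw [gammaAW, div_mul_cancel₀ _ (rs_sub_inv_ne hq0 hq1)]

lemma gammaAW_pos (hq0 : 0 < q) (hq1 : q < 1) (n : ℕ) (hn : 1 ≤ n) :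
    0 < gammaAW q n := by
  have h1 := rs_lt_one hq0 hq1
  have h2 := rs_pos hq0
  have h3 := rs_inv_gt hq0 hq1
  have h4 : Real.sqrt q ^ n < 1 := pow_lt_one₀ (le_of_lt h2) h1 (by omega)
  have h5 : 1 < ((Real.sqrt q)⁻¹) ^ n := one_lt_pow₀ h3 (by omega)
  rw [gammaAW]
  apply div_pos_of_neg_of_neg <;> nlinarith

lemma gammaAW_ne (hq0 : 0 < q) (hq1 : q < 1) (n : ℕ) (hn : 1 ≤ n) :
    gammaAW q n ≠ 0 :=
  ne_of_gt (gammaAW_pos hq0 hq1 n hn)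

lemma gammaAW_one (hq0 : 0 < q) (hq1 : q < 1) : gammaAW q 1 = 1 := by
  rw [gammaAW, pow_one, pow_one, div_self (rs_sub_inv_ne hq0 hq1)]

lemma gammaAW_zero : gammaAW q 0 = 0 := by simp [gammaAW]

end basic

lemma sub_inv_ne_zero {z : ℝ} (hz : z ≠ 0) (hz2 : z ^ 2 ≠ 1) : z - z⁻¹ ≠ 0 := by
  intro h
  apply hz2
  have h1 : z * z⁻¹ = 1 := mul_inv_cancel₀ hz
  have : z * (z - z⁻¹) = 0 := by rw [h]; ring
  nlinarith [this]

noncomputable def chT : ℕ → Polynomial ℝ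
  | 0 => 1
  | 1 => X
  | n + 2 => C 2 * (X * chT (n + 1)) - chT n

noncomputable def chU : ℕ → Polynomial ℝ
  | 0 => 1
  | 1 => C 2 * X
  | n + 2 => C 2 * (X * chU (n + 1)) - chU n

lemma chT_eval (z : ℝ) (hz : z ≠ 0) :
    ∀ n, (chT n).eval ((z + z⁻¹) / 2) = (z ^ n + (z⁻¹) ^ n) / 2 := by
  intro n
  induction n using Nat.strong_induction_on with
  | _ n ih =>
    match n with
    | 0 => simp [chT]
    | 1 => simp [chT]
    | (k + 2) =>
      have h1 := ih (k + 1) (by omega)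
      have h0 := ih k (by omega)
      simp only [chT, eval_sub, eval_mul, eval_C, eval_X, h1, h0]
      linear_combination ((z^k + (z⁻¹)^k)/2) * (mul_inv_cancel₀ hz)

lemma chU_eval (z : ℝ) (hz : z ≠ 0) :
    ∀ n, (chU n).eval ((z + z⁻¹) / 2) * (z - z⁻¹) = z ^ (n+1) - (z⁻¹) ^ (n+1) := by
  intro n
  induction n using Nat.strong_induction_on with
  | _ n ih =>
    match n with
    | 0 => simp [chU]
    | 1 => simp only [chU, eval_mul, eval_C, eval_X]; ring
    | (k + 2) =>
      have h1 := ih (k + 1) (by omega)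
      have h0 := ih k (by omega)
      simp only [chU, eval_sub, eval_mul, eval_C, eval_X]
      have expand : (2 * ((z + z⁻¹) / 2 * eval ((z + z⁻¹) / 2) (chU (k+1))) -
          eval ((z + z⁻¹) / 2) (chU k)) * (z - z⁻¹)
          = (z + z⁻¹) * (eval ((z + z⁻¹) / 2) (chU (k+1)) * (z - z⁻¹))
            - eval ((z + z⁻¹) / 2) (chU k) * (z - z⁻¹) := by ring
      rw [expand, h1, h0]
      linear_combination (z^(k+1) - (z⁻¹)^(k+1)) * (mul_inv_cancel₀ hz)

lemma chT_natDegree_le : ∀ n, (chT n).natDegree ≤ n := by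
  intro n
  induction n using Nat.strong_induction_on with
  | _ n ih =>
    match n with
    | 0 => simp [chT]
    | 1 => simp [chT, natDegree_X_le]
    | (k + 2) =>
      have h1 := ih (k + 1) (by omega)
      have h0 := ih k (by omega)
      rw [chT]
      apply le_trans (natDegree_sub_le _ _)
      simp only [max_le_iff]
      refine ⟨le_trans natDegree_mul_le ?_, by omega⟩
      have hX : (X * chT (k+1)).natDegree ≤ 1 + (k+1) := by
        apply le_trans natDegree_mul_le
        have := natDegree_X_le (R := ℝ)
        omega
      simp only [natDegree_C]
      omega

lemma chU_natDegree_le : ∀ n, (chU n).natDegree ≤ n := by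
  intro n
  induction n using Nat.strong_induction_on with
  | _ n ih =>
    match n with
    | 0 => simp [chU]
    | 1 =>
      apply le_trans natDegree_mul_le
      have := natDegree_X_le (R := ℝ)
      simp only [natDegree_C]
      omega
    | (k + 2) =>
      have h1 := ih (k + 1) (by omega)
      have h0 := ih k (by omega)
      rw [chU]
      apply le_trans (natDegree_sub_le _ _)
      simp only [max_le_iff]
      refine ⟨le_trans natDegree_mul_le ?_, by omega⟩
      have hX : (X * chU (k+1)).natDegree ≤ 1 + (k+1) := by
        apply le_trans natDegree_mul_le
        have := natDegree_X_le (R := ℝ)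
        omega
      simp only [natDegree_C]
      omega

lemma chT_coeff : ∀ n, (chT (n+1)).coeff (n+1) = 2 ^ n
  | 0 => by simp [chT]
  | (k+1) => by
    have h1 := chT_coeff k
    have h0 : (chT k).coeff (k+2) = 0 :=
      coeff_eq_zero_of_natDegree_lt (lt_of_le_of_lt (chT_natDegree_le k) (by omega))
    have hdef : chT (k+2) = C 2 * (X * chT (k+1)) - chT k := rfl
    rw [show k+1+1 = k+2 from rfl, hdef, coeff_sub, coeff_C_mul,
      show k+2 = (k+1)+1 from rfl, coeff_X_mul, h1, h0]
    ring

lemma chU_coeff : ∀ n, (chU n).coeff n = 2 ^ n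
  | 0 => by simp [chU]
  | 1 => by simp [chU, coeff_C_mul]
  | (k+2) => by
    have h1 := chU_coeff (k+1)
    have h0 : (chU k).coeff (k+2) = 0 :=
      coeff_eq_zero_of_natDegree_lt (lt_of_le_of_lt (chU_natDegree_le k) (by omega))
    have hdef : chU (k+2) = C 2 * (X * chU (k+1)) - chU k := rfl
    rw [hdef, coeff_sub, coeff_C_mul, show k+2 = (k+1)+1 from rfl, coeff_X_mul, h1, h0]
    ring

-- continuing inside namespace AWAux; assumes defs above
section ops
variable {q : ℝ}

lemma IsAWDq_add {f₁ f₂ g₁ g₂ : Polynomial ℝ} (h₁ : IsAWDq q f₁ g₁)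
    (h₂ : IsAWDq q f₂ g₂) : IsAWDq q (f₁ + f₂) (g₁ + g₂) := by
  intro z hz hz2
  simp only [eval_add, h₁ z hz hz2, h₂ z hz hz2]
  ring

lemma IsAWDq_smul (c : ℝ) {f g : Polynomial ℝ} (h : IsAWDq q f g) :
    IsAWDq q (C c * f) (C c * g) := by
  intro z hz hz2
  simp only [eval_mul, eval_C, h z hz hz2]
  ring

lemma IsAWSq_add {f₁ f₂ g₁ g₂ : Polynomial ℝ} (h₁ : IsAWSq q f₁ g₁)
    (h₂ : IsAWSq q f₂ g₂) : IsAWSq q (f₁ + f₂) (g₁ + g₂) := by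
  intro z hz hz2
  simp only [eval_add, h₁ z hz hz2, h₂ z hz hz2]
  ring

lemma IsAWSq_smul (c : ℝ) {f g : Polynomial ℝ} (h : IsAWSq q f g) :
    IsAWSq q (C c * f) (C c * g) := by
  intro z hz hz2
  simp only [eval_mul, eval_C, h z hz hz2]
  ring

lemma IsAWDq_C (hq0 : 0 < q) (hq1 : q < 1) (r : ℝ) : IsAWDq q (C r) 0 := by
  intro z hz hz2
  simp only [eval_C, eval_zero, sub_self, zero_div]

lemma IsAWSq_C (r : ℝ) : IsAWSq q (C r) (C r) := by
  intro z hz hz2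
  simp only [eval_C]
  ring

lemma IsAWDq_chT (hq0 : 0 < q) (hq1 : q < 1) (n : ℕ) :
    IsAWDq q (chT (n+1)) (C (gammaAW q (n+1)) * chU n) := by
  intro z hz hz2
  have hs := rs_ne hq0
  have hss := rs_sub_inv_ne hq0 hq1
  have hzz := sub_inv_ne_zero hz hz2
  have e1 : (Real.sqrt q * z + (Real.sqrt q)⁻¹ * z⁻¹) / 2
      = ((Real.sqrt q * z) + (Real.sqrt q * z)⁻¹) / 2 := by rw [mul_inv]
  have e2 : ((Real.sqrt q)⁻¹ * z + Real.sqrt q * z⁻¹) / 2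
      = (((Real.sqrt q)⁻¹ * z) + ((Real.sqrt q)⁻¹ * z)⁻¹) / 2 := by
    rw [mul_inv, inv_inv]
  rw [e1, e2, chT_eval _ (mul_ne_zero hs hz), chT_eval _ (mul_ne_zero (inv_ne_zero hs) hz)]
  have hU := chU_eval z hz n
  have hg := gammaAW_mul_den hq0 hq1 (n+1)
  have hden : (Real.sqrt q - (Real.sqrt q)⁻¹) * (z - z⁻¹) / 2 ≠ 0 := by
    apply div_ne_zero (mul_ne_zero hss hzz) two_ne_zero
  rw [eval_mul, eval_C, eq_div_iff hden]
  calc gammaAW q (n+1) * (chU n).eval ((z + z⁻¹)/2) *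
        ((Real.sqrt q - (Real.sqrt q)⁻¹) * (z - z⁻¹) / 2)
      = (gammaAW q (n+1) * (Real.sqrt q - (Real.sqrt q)⁻¹)) *
        ((chU n).eval ((z + z⁻¹)/2) * (z - z⁻¹)) / 2 := by ring
    _ = ((Real.sqrt q) ^ (n+1) - ((Real.sqrt q)⁻¹) ^ (n+1)) *
        (z ^ (n+1) - (z⁻¹) ^ (n+1)) / 2 := by rw [hg, hU]
    _ = ((Real.sqrt q * z) ^ (n+1) + ((Real.sqrt q * z)⁻¹) ^ (n+1)) / 2 -
        (((Real.sqrt q)⁻¹ * z) ^ (n+1) + (((Real.sqrt q)⁻¹ * z)⁻¹) ^ (n+1)) / 2 := by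
        simp only [mul_inv, inv_inv, mul_pow]
        ring

lemma IsAWSq_chT (hq0 : 0 < q) (n : ℕ) :
    IsAWSq q (chT n) (C (sigmaAW q n) * chT n) := by
  intro z hz hz2
  have hs := rs_ne hq0
  have e1 : (Real.sqrt q * z + (Real.sqrt q)⁻¹ * z⁻¹) / 2
      = ((Real.sqrt q * z) + (Real.sqrt q * z)⁻¹) / 2 := by rw [mul_inv]
  have e2 : ((Real.sqrt q)⁻¹ * z + Real.sqrt q * z⁻¹) / 2
      = (((Real.sqrt q)⁻¹ * z) + ((Real.sqrt q)⁻¹ * z)⁻¹) / 2 := by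
    rw [mul_inv, inv_inv]
  rw [e1, e2, chT_eval _ (mul_ne_zero hs hz), chT_eval _ (mul_ne_zero (inv_ne_zero hs) hz),
    eval_mul, eval_C, chT_eval z hz]
  rw [sigmaAW]
  simp only [mul_inv, inv_inv, mul_pow]
  ring

end ops

section exist
variable {q : ℝ}

/-- Existence of the divided difference and average, by induction on degree. -/
lemma exists_DS (hq0 : 0 < q) (hq1 : q < 1) :
    ∀ (n : ℕ) (f : Polynomial ℝ), f.natDegree ≤ n →
      (∃ g, IsAWDq q f g) ∧ (∃ g, IsAWSq q f g) := by
  intro n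
  induction n with
  | zero =>
    intro f hf
    have : f = C (f.coeff 0) := eq_C_of_natDegree_le_zero hf
    rw [this]
    exact ⟨⟨0, IsAWDq_C hq0 hq1 _⟩, ⟨C (f.coeff 0), IsAWSq_C _⟩⟩
  | succ n ih =>
    intro f hf
    by_cases hle : f.natDegree ≤ n
    · exact ih f hle
    · set c : ℝ := f.coeff (n+1) / 2 ^ n with hc
      set r : Polynomial ℝ := f - C c * chT (n+1) with hr
      have hrd : r.natDegree ≤ n := by
        apply natDegree_le_iff_coeff_eq_zero.mpr
        intro N hN
        rcases Nat.lt_or_ge (n+1) N with h | h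
        · have l1 : f.coeff N = 0 := coeff_eq_zero_of_natDegree_lt (by omega)
          have l2 : (chT (n+1)).coeff N = 0 :=
            coeff_eq_zero_of_natDegree_lt (lt_of_le_of_lt (chT_natDegree_le (n+1)) h)
          simp [hr, coeff_sub, coeff_C_mul, l1, l2]
        · have hNe : N = n + 1 := by omega
          subst hNe
          simp only [hr, coeff_sub, coeff_C_mul, chT_coeff n, hc]
          field_simp
          ring
      obtain ⟨⟨gr, hgr⟩, ⟨sr, hsr⟩⟩ := ih r hrd
      have hfeq : f = C c * chT (n+1) + r := by rw [hr]; ring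
      constructor
      · refine ⟨C c * (C (gammaAW q (n+1)) * chU n) + gr, ?_⟩
        rw [hfeq]
        exact IsAWDq_add (IsAWDq_smul c (IsAWDq_chT hq0 hq1 n)) hgr
      · refine ⟨C c * (C (sigmaAW q (n+1)) * chT (n+1)) + sr, ?_⟩
        rw [hfeq]
        exact IsAWSq_add (IsAWSq_smul c (IsAWSq_chT hq0 (n+1))) hsr

/-- Polynomials agreeing on all `(z+z⁻¹)/2`, `z > 1`, agree. -/
lemma eq_of_eval_phi {p₁ p₂ : Polynomial ℝ}
    (h : ∀ z : ℝ, 1 < z → p₁.eval ((z + z⁻¹)/2) = p₂.eval ((z + z⁻¹)/2)) :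
    p₁ = p₂ := by
  apply Polynomial.eq_of_infinite_eval_eq
  have hsub : (fun z : ℝ => (z + z⁻¹)/2) '' (Set.Ioi 1) ⊆
      {x | p₁.eval x = p₂.eval x} := by
    rintro x ⟨z, hz, rfl⟩
    exact h z hz
  apply Set.Infinite.mono hsub
  apply Set.Infinite.image _ (Set.Ioi_infinite 1)
  intro z hz w hw hzw
  simp only [Set.mem_Ioi] at hz hw
  have hz0 : z ≠ 0 := by positivity
  have hw0 : w ≠ 0 := by positivity
  have h1 : z * w > 1 := by nlinarith
  field_simp at hzw
  -- hzw : some polynomial identity; conclude z = w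
  nlinarith [hzw, mul_pos (lt_trans one_pos hz : (0:ℝ) < z) (lt_trans one_pos hw : (0:ℝ) < w)]

lemma isAWDq_unique (hq0 : 0 < q) (hq1 : q < 1) {f g₁ g₂ : Polynomial ℝ}
    (h₁ : IsAWDq q f g₁) (h₂ : IsAWDq q f g₂) : g₁ = g₂ := by
  apply eq_of_eval_phi
  intro z hz
  have hz0 : z ≠ 0 := by positivity
  have hz2 : z ^ 2 ≠ 1 := by nlinarith
  rw [h₁ z hz0 hz2, h₂ z hz0 hz2]

lemma isAWSq_unique (hq0 : 0 < q) (hq1 : q < 1) {f g₁ g₂ : Polynomial ℝ}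
    (h₁ : IsAWSq q f g₁) (h₂ : IsAWSq q f g₂) : g₁ = g₂ := by
  apply eq_of_eval_phi
  intro z hz
  have hz0 : z ≠ 0 := by positivity
  have hz2 : z ^ 2 ≠ 1 := by nlinarith
  rw [h₁ z hz0 hz2, h₂ z hz0 hz2]

lemma awDq_spec (hq0 : 0 < q) (hq1 : q < 1) (f : Polynomial ℝ) :
    IsAWDq q f (awDq q f) := by
  have hex : ∃ g, IsAWDq q f g := ((exists_DS hq0 hq1) f.natDegree f le_rfl).1
  rw [awDq, dif_pos hex]
  exact hex.choose_spec

lemma awSq_spec (hq0 : 0 < q) (hq1 : q < 1) (f : Polynomial ℝ) :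
    IsAWSq q f (awSq q f) := by
  have hex : ∃ g, IsAWSq q f g := ((exists_DS hq0 hq1) f.natDegree f le_rfl).2
  rw [awSq, dif_pos hex]
  exact hex.choose_spec

lemma awDq_eq (hq0 : 0 < q) (hq1 : q < 1) {f g : Polynomial ℝ}
    (h : IsAWDq q f g) : awDq q f = g :=
  isAWDq_unique hq0 hq1 (awDq_spec hq0 hq1 f) h

/-- Degree and leading coefficient of `awDq`. -/
lemma awDq_coeff (hq0 : 0 < q) (hq1 : q < 1) :
    ∀ (n : ℕ) (f : Polynomial ℝ), f.natDegree ≤ n + 1 →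
      (awDq q f).natDegree ≤ n ∧ (awDq q f).coeff n = gammaAW q (n+1) * f.coeff (n+1) := by
  intro n
  induction n with
  | zero =>
    intro f hf
    have hfeq := eq_X_add_C_of_natDegree_le_one hf
    have hD : IsAWDq q f (C (f.coeff 1)) := by
      rw [hfeq]
      have h1 : IsAWDq q (C (f.coeff 1) * chT 1) (C (f.coeff 1) * (C (gammaAW q 1) * chU 0)) :=
        IsAWDq_smul _ (IsAWDq_chT hq0 hq1 0)
      have h2 := IsAWDq_add h1 (IsAWDq_C hq0 hq1 (f.coeff 0))
      rw [add_zero] at h2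
      have : C (f.coeff 1) * (C (gammaAW q 1) * chU 0) = C (f.coeff 1) := by
        rw [gammaAW_one hq0 hq1]
        simp [chU]
      rw [this] at h2
      simpa [chT] using h2
    rw [awDq_eq hq0 hq1 hD]
    simp [gammaAW_one hq0 hq1]
  | succ n ih =>
    intro f hf
    set c : ℝ := f.coeff (n+2) / 2 ^ (n+1) with hc
    set r : Polynomial ℝ := f - C c * chT (n+2) with hr
    have hrd : r.natDegree ≤ n + 1 := by
      apply natDegree_le_iff_coeff_eq_zero.mpr
      intro N hN
      rcases Nat.lt_or_ge (n+2) N with h | h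
      · have l1 : f.coeff N = 0 := coeff_eq_zero_of_natDegree_lt (by omega)
        have l2 : (chT (n+2)).coeff N = 0 :=
          coeff_eq_zero_of_natDegree_lt (lt_of_le_of_lt (chT_natDegree_le (n+2)) h)
        simp [hr, coeff_sub, coeff_C_mul, l1, l2]
      · have hNe : N = n + 2 := by omega
        subst hNe
        have := chT_coeff (n+1)
        simp only [hr, coeff_sub, coeff_C_mul, this, hc]
        field_simp
        ring
    have hfeq : f = C c * chT (n+2) + r := by rw [hr]; ring
    have hDr := awDq_spec hq0 hq1 r
    have hD : IsAWDq q f (C c * (C (gammaAW q (n+2)) * chU (n+1)) + awDq q r) := by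
      rw [hfeq]
      exact IsAWDq_add (IsAWDq_smul c (IsAWDq_chT hq0 hq1 (n+1))) hDr
    rw [awDq_eq hq0 hq1 hD]
    obtain ⟨ihd, ihc⟩ := ih r hrd
    constructor
    · apply le_trans (natDegree_add_le _ _)
      simp only [max_le_iff]
      constructor
      · apply le_trans natDegree_mul_le
        apply le_trans (add_le_add le_rfl natDegree_mul_le)
        simp only [natDegree_C]
        have := chU_natDegree_le (n+1)
        omega
      · omega
    · have hco : (awDq q r).coeff (n+1) = 0 := coeff_eq_zero_of_natDegree_lt (by omega)
      rw [coeff_add, hco, add_zero, coeff_C_mul, coeff_C_mul, chU_coeff (n+1)]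
      have hrcoeff : r.coeff (n+2) = 0 := coeff_eq_zero_of_natDegree_lt (by omega)
      have : f.coeff (n+2) = c * 2 ^ (n+1) := by
        rw [hc]; field_simp
      rw [this]
      ring

end exist

noncomputable def muAW (q : ℝ) : ℝ := (Real.sqrt q + (Real.sqrt q)⁻¹) / 2

section struct
variable {q : ℝ}

lemma structA (hq0 : 0 < q) (hq1 : q < 1) {f g h : Polynomial ℝ} {α β : ℝ}
    (hf : f = (X - C α) * g - C β * h) :
    awDq q f = awSq q g + C (muAW q) * X * awDq q g - C α * awDq q g - C β * awDq q h := by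
  apply eq_of_eval_phi
  intro z hz
  have hz0 : z ≠ 0 := by positivity
  have hz2 : z ^ 2 ≠ 1 := by nlinarith
  have hzz := sub_inv_ne_zero hz0 hz2
  have hss := rs_sub_inv_ne hq0 hq1
  have hDf := awDq_spec hq0 hq1 f z hz0 hz2
  have hDg := awDq_spec hq0 hq1 g z hz0 hz2
  have hDh := awDq_spec hq0 hq1 h z hz0 hz2
  have hSg := awSq_spec hq0 hq1 g z hz0 hz2
  have hfp : ∀ y : ℝ, f.eval y = (y - α) * g.eval y - β * h.eval y := by
    intro y; rw [hf]; simp [eval_sub, eval_mul, eval_X, eval_C]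
  simp only [eval_add, eval_sub, eval_mul, eval_C, eval_X]
  rw [hDf, hDg, hDh, hSg, hfp, hfp, muAW]
  set A := eval ((Real.sqrt q * z + (Real.sqrt q)⁻¹ * z⁻¹) / 2) g with hA
  set B := eval (((Real.sqrt q)⁻¹ * z + Real.sqrt q * z⁻¹) / 2) g with hB
  have hD : (Real.sqrt q - (Real.sqrt q)⁻¹) * (z - z⁻¹) / 2 ≠ 0 :=
    div_ne_zero (mul_ne_zero hss hzz) two_ne_zero
  linear_combination ((A + B)/2) * (mul_inv_cancel₀ hD)

lemma structB (hq0 : 0 < q) (hq1 : q < 1) {f g h : Polynomial ℝ} {α β : ℝ}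
    (hf : f = (X - C α) * g - C β * h) :
    awSq q f = C (muAW q) * X * awSq q g + C (muAW q ^ 2 - 1) * (X ^ 2 - 1) * awDq q g
      - C α * awSq q g - C β * awSq q h := by
  apply eq_of_eval_phi
  intro z hz
  have hz0 : z ≠ 0 := by positivity
  have hz2 : z ^ 2 ≠ 1 := by nlinarith
  have hzz := sub_inv_ne_zero hz0 hz2
  have hss := rs_sub_inv_ne hq0 hq1
  have hDg := awDq_spec hq0 hq1 g z hz0 hz2
  have hSf := awSq_spec hq0 hq1 f z hz0 hz2
  have hSg := awSq_spec hq0 hq1 g z hz0 hz2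
  have hSh := awSq_spec hq0 hq1 h z hz0 hz2
  have hfp : ∀ y : ℝ, f.eval y = (y - α) * g.eval y - β * h.eval y := by
    intro y; rw [hf]; simp [eval_sub, eval_mul, eval_X, eval_C]
  simp only [eval_add, eval_sub, eval_mul, eval_C, eval_X, eval_pow, eval_one]
  rw [hSf, hSg, hSh, hDg, hfp, hfp, muAW]
  set A := eval ((Real.sqrt q * z + (Real.sqrt q)⁻¹ * z⁻¹) / 2) g with hA
  set B := eval (((Real.sqrt q)⁻¹ * z + Real.sqrt q * z⁻¹) / 2) g with hB
  have hD : (Real.sqrt q - (Real.sqrt q)⁻¹) * (z - z⁻¹) / 2 ≠ 0 :=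
    div_ne_zero (mul_ne_zero hss hzz) two_ne_zero
  have hs := rs_ne hq0
  linear_combination (-(A - B) * ((Real.sqrt q - (Real.sqrt q)⁻¹) * (z - z⁻¹) / 2) / 4) *
      (mul_inv_cancel₀ hD)
    + (-(A - B) * (((z - z⁻¹)/2)^2 + (z * z⁻¹ - 1)) *
        ((Real.sqrt q - (Real.sqrt q)⁻¹) * (z - z⁻¹) / 2)⁻¹) * (mul_inv_cancel₀ hs)
    + (-(A - B) * ((Real.sqrt q - (Real.sqrt q)⁻¹)/2)^2 *
        ((Real.sqrt q - (Real.sqrt q)⁻¹) * (z - z⁻¹) / 2)⁻¹) * (mul_inv_cancel₀ hz0)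

end struct

section linind

lemma lin_indep_aux (Q : ℕ → Polynomial ℝ)
    (hQ : ∀ k, (Q k).Monic ∧ (Q k).natDegree = k) :
    ∀ (N : ℕ) (s : Finset ℕ) (g : ℕ → ℝ), (∀ i ∈ s, i < N) →
      ∑ i ∈ s, g i • Q i = 0 → ∀ i ∈ s, g i = 0 := by
  intro N
  induction N with
  | zero => intro s g hs hsum i hi; exact absurd (hs i hi) (by omega)
  | succ N ih =>
    intro s g hs hsum i hi
    by_cases hN : N ∈ s
    · have hgN : g N = 0 := by
        have hco := congrArg (fun p => Polynomial.coeff p N) hsum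
        simp only [Polynomial.finset_sum_coeff, Polynomial.coeff_smul, smul_eq_mul,
          Polynomial.coeff_zero] at hco
        rw [Finset.sum_eq_single N] at hco
        · have hone : (Q N).coeff N = 1 := by
            have h2 := (hQ N).1.coeff_natDegree
            rw [(hQ N).2] at h2
            exact h2
          rw [hone, mul_one] at hco
          exact hco
        · intro j hj hjne
          have hjlt : j < N := by have := hs j hj; omega
          have : (Q j).coeff N = 0 :=
            Polynomial.coeff_eq_zero_of_natDegree_lt (by rw [(hQ j).2]; omega)
          rw [this, mul_zero]
        · intro h; exact absurd hN h
      have hsum' : ∑ j ∈ s.erase N, g j • Q j = 0 := by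
        have heq := Finset.add_sum_erase s (fun j => g j • Q j) hN
        rw [← heq] at hsum
        simp only [hgN, zero_smul, zero_add] at hsum
        exact hsum
      have hrest := ih (s.erase N) g
        (fun j hj => by
          have h1 := Finset.mem_of_mem_erase hj
          have h2 := Finset.ne_of_mem_erase hj
          have := hs j h1; omega) hsum'
      rcases eq_or_ne i N with rfl | hne
      · exact hgN
      · exact hrest i (Finset.mem_erase.mpr ⟨hne, hi⟩)
    · exact ih s g (fun j hj => by have h1 := hs j hj; rcases eq_or_ne j N with rfl | h2
                                   · exact absurd hj hN
                                   · omega) hsum i hi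

lemma lin_indep (Q : ℕ → Polynomial ℝ)
    (hQ : ∀ k, (Q k).Monic ∧ (Q k).natDegree = k) :
    LinearIndependent ℝ Q := by
  rw [linearIndependent_iff']
  intro s g hsum i hi
  exact lin_indep_aux Q hQ (s.sup id + 1) s g
    (fun j hj => by have := Finset.le_sup (f := id) hj; simp at this; omega) hsum i hi

end linind

section orth
open MeasureTheory

variable {a b : ℝ} {w : ℝ → ℝ}

lemma integ_poly (hint : ∀ k : ℕ, IntegrableOn (fun x => x ^ k * w x) (Set.Ioo a b))
    (f : Polynomial ℝ) :
    IntegrableOn (fun x => f.eval x * w x) (Set.Ioo a b) := by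
  induction f using Polynomial.induction_on' with
  | add p r hp hr =>
    have h := hp.add hr
    have heq : (fun x => (p + r).eval x * w x)
        = (fun x => p.eval x * w x) + (fun x => r.eval x * w x) := by
      funext x; simp [Polynomial.eval_add]; ring
    rw [IntegrableOn, heq]
    exact h
  | monomial k r =>
    have h := (hint k).const_mul r
    have : (fun x => (Polynomial.monomial k r).eval x * w x) = fun x => r * (x ^ k * w x) := by
      funext x; simp [Polynomial.eval_monomial]; ring
    rw [this]
    exact h

lemma L_add (hint : ∀ k : ℕ, IntegrableOn (fun x => x ^ k * w x) (Set.Ioo a b))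
    (f g : Polynomial ℝ) :
    ∫ x in Set.Ioo a b, (f + g).eval x * w x
      = (∫ x in Set.Ioo a b, f.eval x * w x) + ∫ x in Set.Ioo a b, g.eval x * w x := by
  rw [← integral_add (integ_poly hint f) (integ_poly hint g)]
  congr 1
  funext x
  simp [Polynomial.eval_add]
  ring

lemma L_smul (r : ℝ) (f : Polynomial ℝ) :
    ∫ x in Set.Ioo a b, (Polynomial.C r * f).eval x * w x
      = r * ∫ x in Set.Ioo a b, f.eval x * w x := by
  rw [← integral_const_mul]
  congr 1
  funext x
  simp [Polynomial.eval_mul]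
  ring

lemma L_sum (hint : ∀ k : ℕ, IntegrableOn (fun x => x ^ k * w x) (Set.Ioo a b))
    (t : Finset ℕ) (F : ℕ → Polynomial ℝ) :
    ∫ x in Set.Ioo a b, (∑ k ∈ t, F k).eval x * w x
      = ∑ k ∈ t, ∫ x in Set.Ioo a b, (F k).eval x * w x := by
  induction t using Finset.induction_on with
  | empty => simp
  | insert _ _ hnm ih =>
    rename_i n t'
    rw [Finset.sum_insert hnm, Finset.sum_insert hnm, L_add hint, ih]

lemma L_pos (hab : a < b) (hw : ∀ x ∈ Set.Ioo a b, 0 < w x)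
    (hint : ∀ k : ℕ, IntegrableOn (fun x => x ^ k * w x) (Set.Ioo a b))
    (f : Polynomial ℝ) (hf : f ≠ 0) :
    0 < ∫ x in Set.Ioo a b, (f * f).eval x * w x := by
  rw [setIntegral_pos_iff_support_of_nonneg_ae]
  · -- 0 < volume (support ∩ Ioo)
    set F : ℝ → ℝ := fun x => (f * f).eval x * w x with hF
    have hroots : MeasureTheory.volume {x : ℝ | f.IsRoot x} = 0 :=
      (Polynomial.finite_setOf_isRoot hf).measure_zero _
    have hsub2 : Set.Ioo a b ⊆ (Function.support F ∩ Set.Ioo a b) ∪ {x | f.IsRoot x} := by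
      intro x hx
      by_cases hFx : F x = 0
      · right
        have hwx := hw x hx
        simp only [hF, Polynomial.eval_mul] at hFx
        rcases mul_eq_zero.mp hFx with h | h
        · rcases mul_eq_zero.mp h with h' | h' <;> exact h'
        · exact absurd h (ne_of_gt hwx)
      · left; exact ⟨hFx, hx⟩
    by_contra hcon
    push_neg at hcon
    have h0 : MeasureTheory.volume (Function.support F ∩ Set.Ioo a b) = 0 := le_antisymm hcon zero_le
    have hle := measure_mono hsub2 (μ := MeasureTheory.volume)
    have hun := measure_union_le (μ := MeasureTheory.volume)
      (Function.support F ∩ Set.Ioo a b) {x | f.IsRoot x}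
    rw [h0, hroots, add_zero] at hun
    have : MeasureTheory.volume (Set.Ioo a b) = 0 := le_antisymm (le_trans hle hun) zero_le
    rw [Real.volume_Ioo] at this
    have := ENNReal.ofReal_eq_zero.mp this
    linarith
  · apply ae_restrict_of_forall_mem measurableSet_Ioo
    intro x hx
    have := hw x hx
    simp only [Polynomial.eval_mul, Pi.zero_apply]
    nlinarith [sq_nonneg (f.eval x)]
  · exact integ_poly hint (f * f)

variable {P : ℕ → Polynomial ℝ}

lemma expandP (hmonic : ∀ n, (P n).Monic) (hdeg : ∀ n, (P n).natDegree = n) :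
    ∀ (M : ℕ) (f : Polynomial ℝ), f.natDegree ≤ M →
      ∃ d : ℕ → ℝ, f = ∑ k ∈ Finset.range (M + 1), Polynomial.C (d k) * P k := by
  intro M
  induction M with
  | zero =>
    intro f hf
    have h0 : P 0 = 1 := Polynomial.Monic.natDegree_eq_zero (hmonic 0) |>.mp (hdeg 0)
    refine ⟨fun _ => f.coeff 0, ?_⟩
    rw [Finset.sum_range_one, h0, mul_one]
    exact Polynomial.eq_C_of_natDegree_le_zero hf
  | succ M ih =>
    intro f hf
    set g := f - Polynomial.C (f.coeff (M + 1)) * P (M + 1) with hg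
    have hgd : g.natDegree ≤ M := by
      apply Polynomial.natDegree_le_iff_coeff_eq_zero.mpr
      intro N hN
      rcases Nat.lt_or_ge (M + 1) N with h | h
      · have l1 : f.coeff N = 0 := Polynomial.coeff_eq_zero_of_natDegree_lt (by omega)
        have l2 : (P (M + 1)).coeff N = 0 :=
          Polynomial.coeff_eq_zero_of_natDegree_lt (by rw [hdeg]; omega)
        simp [hg, l1, l2]
      · have hNe : N = M + 1 := by omega
        subst hNe
        have l2 : (P (M + 1)).coeff (M + 1) = 1 := by
          have := (hmonic (M + 1)).coeff_natDegree
          rw [hdeg] at this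
          exact this
        simp [hg, l2]
    obtain ⟨d, hd⟩ := ih g hgd
    refine ⟨fun k => if k = M + 1 then f.coeff (M + 1) else d k, ?_⟩
    rw [Finset.sum_range_succ]
    have hcong : ∑ k ∈ Finset.range (M + 1),
        Polynomial.C (if k = M + 1 then f.coeff (M + 1) else d k) * P k
        = ∑ k ∈ Finset.range (M + 1), Polynomial.C (d k) * P k := by
      apply Finset.sum_congr rfl
      intro k hk
      have hkne : k ≠ M + 1 := by have := Finset.mem_range.mp hk; omega
      rw [if_neg hkne]
    rw [hcong, ← hd]
    have hred : (fun k => if k = M + 1 then f.coeff (M + 1) else d k) (M + 1)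
        = f.coeff (M + 1) := by simp
    rw [hred, hg]
    ring

lemma orth_low (hmonic : ∀ n, (P n).Monic) (hdeg : ∀ n, (P n).natDegree = n)
    (hint : ∀ k : ℕ, IntegrableOn (fun x => x ^ k * w x) (Set.Ioo a b))
    (horth : ∀ m n, m ≠ n → ∫ x in Set.Ioo a b, (P m).eval x * (P n).eval x * w x = 0)
    (j : ℕ) (f : Polynomial ℝ) (hfd : f.natDegree + 1 ≤ j) :
    ∫ x in Set.Ioo a b, (P j * f).eval x * w x = 0 := by
  obtain ⟨d, hd⟩ := expandP hmonic hdeg f.natDegree f le_rfl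
  set M := f.natDegree with hM
  have horth' : ∀ m n : ℕ, m ≠ n → ∫ x in Set.Ioo a b, (P m * P n).eval x * w x = 0 := by
    intro m n hmn
    rw [← horth m n hmn]
    congr 1; funext x; simp [Polynomial.eval_mul]
  have key : P j * f = ∑ k ∈ Finset.range (M + 1), Polynomial.C (d k) * (P j * P k) := by
    calc P j * f = P j * ∑ k ∈ Finset.range (M + 1), Polynomial.C (d k) * P k := by rw [← hd]
      _ = _ := by
          rw [Finset.mul_sum]
          apply Finset.sum_congr rfl
          intro k hk; ring
  rw [key, L_sum hint]
  apply Finset.sum_eq_zero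
  intro k hk
  rw [L_smul, horth' j k (by have := Finset.mem_range.mp hk; omega), mul_zero]

lemma ttrr (hab : a < b) (hw : ∀ x ∈ Set.Ioo a b, 0 < w x)
    (hmonic : ∀ n, (P n).Monic) (hdeg : ∀ n, (P n).natDegree = n)
    (hint : ∀ k : ℕ, IntegrableOn (fun x => x ^ k * w x) (Set.Ioo a b))
    (horth : ∀ m n, m ≠ n → ∫ x in Set.Ioo a b, (P m).eval x * (P n).eval x * w x = 0)
    (m : ℕ) :
    ∃ α β : ℝ, P (m + 2) = (Polynomial.X - Polynomial.C α) * P (m + 1) - Polynomial.C β * P m := by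
  set G := P (m + 2) - Polynomial.X * P (m + 1) with hG
  have hGd : G.natDegree ≤ m + 1 := by
    apply Polynomial.natDegree_le_iff_coeff_eq_zero.mpr
    intro N hN
    rcases Nat.lt_or_ge (m + 2) N with h | h
    · have l1 : (P (m + 2)).coeff N = 0 :=
        Polynomial.coeff_eq_zero_of_natDegree_lt (by rw [hdeg]; omega)
      have l2 : (Polynomial.X * P (m + 1)).coeff N = 0 := by
        apply Polynomial.coeff_eq_zero_of_natDegree_lt
        apply lt_of_le_of_lt Polynomial.natDegree_mul_le
        rw [hdeg]
        have := Polynomial.natDegree_X_le (R := ℝ)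
        omega
      simp [hG, l1, l2]
    · have hNe : N = m + 2 := by omega
      subst hNe
      have l1 : (P (m + 2)).coeff (m + 2) = 1 := by
        have := (hmonic (m + 2)).coeff_natDegree; rw [hdeg] at this; exact this
      have l2 : (Polynomial.X * P (m + 1)).coeff (m + 2) = 1 := by
        rw [show m + 2 = (m + 1) + 1 from rfl, Polynomial.coeff_X_mul]
        have := (hmonic (m + 1)).coeff_natDegree; rw [hdeg] at this; exact this
      simp [hG, l1, l2]
  obtain ⟨d, hd⟩ := expandP hmonic hdeg (m + 1) G hGd
  -- low coefficients vanish
  have hlow : ∀ k, k + 2 ≤ m + 1 → d k = 0 := by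
    intro k hk
    have hLG : ∫ x in Set.Ioo a b, (G * P k).eval x * w x
        = d k * ∫ x in Set.Ioo a b, (P k * P k).eval x * w x := by
      have key : G * P k = ∑ j ∈ Finset.range (m + 2), Polynomial.C (d j) * (P j * P k) := by
        calc G * P k
            = (∑ j ∈ Finset.range (m + 2), Polynomial.C (d j) * P j) * P k := by rw [← hd]
          _ = _ := by
              rw [Finset.sum_mul]
              apply Finset.sum_congr rfl
              intro j hj; ring
      calc ∫ x in Set.Ioo a b, (G * P k).eval x * w x
          = ∫ x in Set.Ioo a b,
              (∑ j ∈ Finset.range (m + 2), Polynomial.C (d j) * (P j * P k)).eval x * w x := by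
            rw [key]
        _ = ∑ j ∈ Finset.range (m + 2),
              ∫ x in Set.Ioo a b, (Polynomial.C (d j) * (P j * P k)).eval x * w x :=
            L_sum hint _ _
        _ = d k * ∫ x in Set.Ioo a b, (P k * P k).eval x * w x := by
            rw [Finset.sum_eq_single k]
            · rw [L_smul]
            · intro j hj hjk
              rw [L_smul]
              have horth' : ∫ x in Set.Ioo a b, (P j * P k).eval x * w x = 0 := by
                rw [← horth j k hjk]
                congr 1; funext x; simp [Polynomial.eval_mul]
              rw [horth', mul_zero]
            · intro hcon
              exact absurd (Finset.mem_range.mpr (by omega)) hcon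
    have hzero : ∫ x in Set.Ioo a b, (G * P k).eval x * w x = 0 := by
      have h1 : ∫ x in Set.Ioo a b, (P (m + 2) * P k).eval x * w x = 0 := by
        rw [← horth (m + 2) k (by omega)]
        congr 1; funext x; simp [Polynomial.eval_mul]
      have h2 : ∫ x in Set.Ioo a b, ((Polynomial.X * P (m + 1)) * P k).eval x * w x = 0 := by
        have heq : (Polynomial.X * P (m + 1)) * P k = P (m + 1) * (Polynomial.X * P k) := by ring
        rw [heq]
        apply orth_low hmonic hdeg hint horth
        have : (Polynomial.X * P k).natDegree ≤ 1 + k := by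
          apply le_trans Polynomial.natDegree_mul_le
          rw [hdeg]
          have := Polynomial.natDegree_X_le (R := ℝ)
          omega
        omega
      have heval : ∀ x : ℝ, (G * P k).eval x
          = (P (m + 2) * P k).eval x - ((Polynomial.X * P (m + 1)) * P k).eval x := by
        intro x; rw [hG]; simp [Polynomial.eval_mul, Polynomial.eval_sub]; ring
      calc ∫ x in Set.Ioo a b, (G * P k).eval x * w x
          = ∫ x in Set.Ioo a b, ((P (m + 2) * P k).eval x * w x
              - ((Polynomial.X * P (m + 1)) * P k).eval x * w x) := by
            congr 1; funext x; rw [heval]; ring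
        _ = 0 := by
            rw [integral_sub (integ_poly hint _) (integ_poly hint _), h1, h2, sub_zero]
    have hposk := L_pos hab hw hint (P k) (hmonic k).ne_zero
    have := hLG.symm.trans hzero
    rcases mul_eq_zero.mp this with h | h
    · exact h
    · exact absurd h (ne_of_gt hposk)
  refine ⟨-(d (m + 1)), -(d m), ?_⟩
  have hsplit : G = (∑ k ∈ Finset.range m, Polynomial.C (d k) * P k)
      + Polynomial.C (d m) * P m + Polynomial.C (d (m + 1)) * P (m + 1) := by
    rw [hd, Finset.sum_range_succ, Finset.sum_range_succ]
  have hzero_sum : (∑ k ∈ Finset.range m, Polynomial.C (d k) * P k) = 0 := by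
    apply Finset.sum_eq_zero
    intro k hk
    have := Finset.mem_range.mp hk
    rw [hlow k (by omega)]
    simp
  rw [hzero_sum, zero_add] at hsplit
  have : P (m + 2) - Polynomial.X * P (m + 1)
      = Polynomial.C (d m) * P m + Polynomial.C (d (m + 1)) * P (m + 1) := hsplit
  rw [map_neg, map_neg]
  linear_combination this

end orth

noncomputable def QfamAW (q : ℝ) (P : ℕ → Polynomial ℝ) (k : ℕ) : Polynomial ℝ :=
  Polynomial.C (gammaAW q (k+1))⁻¹ * awDq q (P (k+1))

section qfam
variable {q : ℝ} {P : ℕ → Polynomial ℝ}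

lemma QfamAW_D (hq0 : 0 < q) (hq1 : q < 1) (k : ℕ) :
    awDq q (P (k+1)) = Polynomial.C (gammaAW q (k+1)) * QfamAW q P k := by
  rw [QfamAW, ← mul_assoc, ← Polynomial.C_mul,
    mul_inv_cancel₀ (gammaAW_ne hq0 hq1 (k+1) (by omega)), Polynomial.C_1, one_mul]

lemma QfamAW_monic (hq0 : 0 < q) (hq1 : q < 1)
    (hmonic : ∀ n, (P n).Monic) (hdeg : ∀ n, (P n).natDegree = n) (k : ℕ) :
    (QfamAW q P k).Monic ∧ (QfamAW q P k).natDegree = k := by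
  obtain ⟨hd, hc⟩ := awDq_coeff hq0 hq1 k (P (k+1)) (le_of_eq (hdeg (k+1)))
  have hlc : (P (k+1)).coeff (k+1) = 1 := by
    have := (hmonic (k+1)).coeff_natDegree; rw [hdeg] at this; exact this
  have hγ := gammaAW_ne hq0 hq1 (k+1) (by omega)
  have hck : (QfamAW q P k).coeff k = 1 := by
    rw [QfamAW, Polynomial.coeff_C_mul, hc, hlc, mul_one, inv_mul_cancel₀ hγ]
  have hdk : (QfamAW q P k).natDegree ≤ k := by
    apply le_trans Polynomial.natDegree_mul_le
    simp only [Polynomial.natDegree_C]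
    omega
  have hdk' : (QfamAW q P k).natDegree = k :=
    le_antisymm hdk (Polynomial.le_natDegree_of_ne_zero (by rw [hck]; norm_num))
  refine ⟨?_, hdk'⟩
  rw [Polynomial.Monic, Polynomial.leadingCoeff, hdk', hck]

lemma QfamAW_zero (hq0 : 0 < q) (hq1 : q < 1)
    (hmonic : ∀ n, (P n).Monic) (hdeg : ∀ n, (P n).natDegree = n) :
    QfamAW q P 0 = 1 := by
  obtain ⟨hd, hc⟩ := awDq_coeff hq0 hq1 0 (P 1) (le_of_eq (hdeg 1))
  have hlc : (P 1).coeff 1 = 1 := by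
    have := (hmonic 1).coeff_natDegree; rw [hdeg] at this; exact this
  have hD1 : awDq q (P 1) = Polynomial.C 1 := by
    rw [Polynomial.eq_C_of_natDegree_le_zero hd, hc, hlc, mul_one, gammaAW_one hq0 hq1]
  rw [QfamAW, hD1, gammaAW_one hq0 hq1]
  norm_num

lemma gamma_rec (hq0 : 0 < q) (hq1 : q < 1) (m : ℕ) :
    gammaAW q (m+2) = 2 * muAW q * gammaAW q (m+1) - gammaAW q m := by
  rw [gammaAW, gammaAW, gammaAW, muAW]
  have hs := rs_ne hq0
  linear_combination (-(((Real.sqrt q)^m - ((Real.sqrt q)⁻¹)^m)) *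
    (Real.sqrt q - (Real.sqrt q)⁻¹)⁻¹) * (mul_inv_cancel₀ hs)

end qfam

end AWAux





open AWAux

set_option maxHeartbeats 4000000

theorem stmt1 (q : ℝ) (hq0 : 0 < q) (hq1 : q < 1)
    (a b : ℝ) (hab : a < b)
    (w : ℝ → ℝ) (hw : ∀ x ∈ Set.Ioo a b, 0 < w x)
    (P : ℕ → Polynomial ℝ) (hmonic : ∀ n, (P n).Monic) (hdeg : ∀ n, (P n).natDegree = n)
    (hint : ∀ k : ℕ, IntegrableOn (fun x => x ^ k * w x) (Set.Ioo a b))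
    (horth : ∀ m n, m ≠ n → ∫ x in Set.Ioo a b, (P m).eval x * (P n).eval x * w x = 0)
    (hsub : Set.Ioo a b ⊆ Set.Ioo (-1 : ℝ) 1)
    (a' b' c : ℕ → ℝ)
    (hrec : ∀ n, 2 ≤ n →
      C (gammaAW q (n + 1))⁻¹ * awDq q (P (n + 1)) =
        (X - C (a' n)) * (C (gammaAW q n)⁻¹ * awDq q (P n)) -
          C (b' n / gammaAW q (n - 1)) * awDq q (P (n - 1)) + C (c n)) :
    ∀ n, 5 ≤ n → c n = 0 := by
  intro n hn
  obtain ⟨p, rfl⟩ : ∃ p, n = p + 5 := ⟨n - 5, by omega⟩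
  by_contra hc5
  set Qf : ℕ → Polynomial ℝ := QfamAW q P with hQfdef
  have hQmono : ∀ k, (Qf k).Monic ∧ (Qf k).natDegree = k :=
    fun k => AWAux.QfamAW_monic hq0 hq1 hmonic hdeg k
  -- three-term recurrences for P
  obtain ⟨al3, be3, h3⟩ := AWAux.ttrr hab hw hmonic hdeg hint horth (p+3)
  obtain ⟨al4, be4, h4⟩ := AWAux.ttrr hab hw hmonic hdeg hint horth (p+4)
  obtain ⟨al5, be5, h5⟩ := AWAux.ttrr hab hw hmonic hdeg hint horth (p+5)
  rw [show p+3+2 = p+5 from rfl, show p+3+1 = p+4 from rfl] at h3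
  rw [show p+4+2 = p+6 from rfl, show p+4+1 = p+5 from rfl] at h4
  rw [show p+5+2 = p+7 from rfl, show p+5+1 = p+6 from rfl] at h5
  have hA3 := AWAux.structA hq0 hq1 h3
  have hA4 := AWAux.structA hq0 hq1 h4
  have hA5 := AWAux.structA hq0 hq1 h5
  have hB4 := AWAux.structB hq0 hq1 h4
  have hCmu : (C (muAW q ^ 2 - 1) : Polynomial ℝ) = C (muAW q) * C (muAW q) - 1 := by
    rw [map_sub, map_pow, Polynomial.C_1]; ring
  rw [hCmu] at hB4
  have hS4 : awSq q (P (p+4)) = awDq q (P (p+5)) - C (muAW q) * X * awDq q (P (p+4))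
      + C al3 * awDq q (P (p+4)) + C be3 * awDq q (P (p+3)) := by linear_combination -hA3
  have hS5 : awSq q (P (p+5)) = awDq q (P (p+6)) - C (muAW q) * X * awDq q (P (p+5))
      + C al4 * awDq q (P (p+5)) + C be4 * awDq q (P (p+4)) := by linear_combination -hA4
  have hS6 : awSq q (P (p+6)) = awDq q (P (p+7)) - C (muAW q) * X * awDq q (P (p+6))
      + C al5 * awDq q (P (p+6)) + C be5 * awDq q (P (p+5)) := by linear_combination -hA5
  -- rewrite D's in terms of the monic family Qf
  have hD2 : awDq q (P (p+3)) = C (gammaAW q (p+3)) * Qf (p+2) :=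
    AWAux.QfamAW_D hq0 hq1 (p+2)
  have hD3 : awDq q (P (p+4)) = C (gammaAW q (p+4)) * Qf (p+3) :=
    AWAux.QfamAW_D hq0 hq1 (p+3)
  have hD4 : awDq q (P (p+5)) = C (gammaAW q (p+5)) * Qf (p+4) :=
    AWAux.QfamAW_D hq0 hq1 (p+4)
  have hD5 : awDq q (P (p+6)) = C (gammaAW q (p+6)) * Qf (p+5) :=
    AWAux.QfamAW_D hq0 hq1 (p+5)
  have hD6 : awDq q (P (p+7)) = C (gammaAW q (p+7)) * Qf (p+6) :=
    AWAux.QfamAW_D hq0 hq1 (p+6)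
  have hg7 : gammaAW q (p+7) = 2 * muAW q * gammaAW q (p+6) - gammaAW q (p+5) := by
    have h := AWAux.gamma_rec hq0 hq1 (p+5)
    rwa [show p+5+2 = p+7 from rfl, show p+5+1 = p+6 from rfl] at h
  have hD6' : awDq q (P (p+7)) =
      (2 * C (muAW q) * C (gammaAW q (p+6)) - C (gammaAW q (p+5))) * Qf (p+6) := by
    rw [hD6, hg7, map_sub, map_mul, map_mul, map_ofNat]
  -- recurrences for Qf from hrec
  have hH6 : Qf (p+6) = (X - C (a' (p+6))) * Qf (p+5) - C (b' (p+6)) * Qf (p+4)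
      + C (c (p+6)) := by
    have h := hrec (p+6) (by omega)
    rw [show p+6+1 = p+7 from rfl, show p+6-1 = p+5 from rfl] at h
    have e1 : Qf (p+6) = C (gammaAW q (p+7))⁻¹ * awDq q (P (p+7)) := rfl
    have e2 : Qf (p+5) = C (gammaAW q (p+6))⁻¹ * awDq q (P (p+6)) := rfl
    have hb : C (b' (p+6) / gammaAW q (p+5)) * awDq q (P (p+5)) = C (b' (p+6)) * Qf (p+4) := by
      rw [hD4, ← mul_assoc, ← Polynomial.C_mul,
        div_mul_cancel₀ _ (AWAux.gammaAW_ne hq0 hq1 (p+5) (by omega))]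
    rw [← e1, ← e2, hb] at h
    exact h
  have hH5 : Qf (p+5) = (X - C (a' (p+5))) * Qf (p+4) - C (b' (p+5)) * Qf (p+3)
      + C (c (p+5)) := by
    have h := hrec (p+5) (by omega)
    rw [show p+5+1 = p+6 from rfl, show p+5-1 = p+4 from rfl] at h
    have e1 : Qf (p+5) = C (gammaAW q (p+6))⁻¹ * awDq q (P (p+6)) := rfl
    have e2 : Qf (p+4) = C (gammaAW q (p+5))⁻¹ * awDq q (P (p+5)) := rfl
    have hb : C (b' (p+5) / gammaAW q (p+4)) * awDq q (P (p+4)) = C (b' (p+5)) * Qf (p+3) := by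
      rw [hD3, ← mul_assoc, ← Polynomial.C_mul,
        div_mul_cancel₀ _ (AWAux.gammaAW_ne hq0 hq1 (p+4) (by omega))]
    rw [← e1, ← e2, hb] at h
    exact h
  have hH4 : Qf (p+4) = (X - C (a' (p+4))) * Qf (p+3) - C (b' (p+4)) * Qf (p+2)
      + C (c (p+4)) := by
    have h := hrec (p+4) (by omega)
    rw [show p+4+1 = p+5 from rfl, show p+4-1 = p+3 from rfl] at h
    have e1 : Qf (p+4) = C (gammaAW q (p+5))⁻¹ * awDq q (P (p+5)) := rfl
    have e2 : Qf (p+3) = C (gammaAW q (p+4))⁻¹ * awDq q (P (p+4)) := rfl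
    have hb : C (b' (p+4) / gammaAW q (p+3)) * awDq q (P (p+3)) = C (b' (p+4)) * Qf (p+2) := by
      rw [hD2, ← mul_assoc, ← Polynomial.C_mul,
        div_mul_cancel₀ _ (AWAux.gammaAW_ne hq0 hq1 (p+3) (by omega))]
    rw [← e1, ← e2, hb] at h
    exact h
  -- substitute everything into hB4
  rw [hD6', hD5, hD4] at hS6
  rw [hH6] at hS6
  rw [hD5, hD4, hD3] at hS5
  rw [hD4, hD3, hD2] at hS4
  rw [hS6, hS5, hS4, hD4] at hB4
  rw [hH5] at hB4
  -- the key identity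
  have key : C (gammaAW q (p+5) * c (p+5)) * X
      = C (al5 * gammaAW q (p+6) + al4 * gammaAW q (p+6) - 2 * al4 * muAW q * gammaAW q (p+5)
            + a' (p+6) * gammaAW q (p+5) - 2 * a' (p+6) * muAW q * gammaAW q (p+6)
            + a' (p+5) * gammaAW q (p+5)) * (X * Qf (p+4))
        + C (muAW q ^ 2 * gammaAW q (p+5) - gammaAW q (p+5) + be5 * gammaAW q (p+5)
            + be4 * gammaAW q (p+5) + al4 ^ 2 * gammaAW q (p+5) + b' (p+6) * gammaAW q (p+5)
            - 2 * b' (p+6) * muAW q * gammaAW q (p+6) - a' (p+5) * al5 * gammaAW q (p+6)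
            - a' (p+5) * al4 * gammaAW q (p+6) - a' (p+5) * a' (p+6) * gammaAW q (p+5)
            + 2 * a' (p+5) * a' (p+6) * muAW q * gammaAW q (p+6)) * Qf (p+4)
        + C (b' (p+5) * gammaAW q (p+5) - 2 * be4 * muAW q * gammaAW q (p+4)) * (X * Qf (p+3))
        + C (be4 * al3 * gammaAW q (p+4) + al4 * be4 * gammaAW q (p+4)
            - b' (p+5) * al5 * gammaAW q (p+6) - b' (p+5) * al4 * gammaAW q (p+6)
            - b' (p+5) * a' (p+6) * gammaAW q (p+5)
            + 2 * b' (p+5) * a' (p+6) * muAW q * gammaAW q (p+6)) * Qf (p+3)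
        + C (be4 * be3 * gammaAW q (p+3)) * Qf (p+2)
        + C (2 * c (p+6) * muAW q * gammaAW q (p+6) - c (p+6) * gammaAW q (p+5)
            + c (p+5) * al5 * gammaAW q (p+6) + c (p+5) * al4 * gammaAW q (p+6)
            + c (p+5) * a' (p+6) * gammaAW q (p+5)
            - 2 * c (p+5) * a' (p+6) * muAW q * gammaAW q (p+6)) := by
    simp only [map_mul, map_add, map_sub, map_pow, map_ofNat]
    linear_combination -hB4
  -- membership argument
  set W : Submodule ℝ (Polynomial ℝ) := Submodule.span ℝ (Qf '' {j | j ≠ 1}) with hW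
  have hQW : ∀ j, j ≠ 1 → Qf j ∈ W := fun j hj => Submodule.subset_span ⟨j, hj, rfl⟩
  have hQ0 : Qf 0 = 1 := AWAux.QfamAW_zero hq0 hq1 hmonic hdeg
  have hCW : ∀ r : ℝ, (C r : Polynomial ℝ) ∈ W := by
    intro r
    have heq : (C r : Polynomial ℝ) = r • Qf 0 := by
      rw [hQ0, Polynomial.smul_eq_C_mul, mul_one]
    rw [heq]
    exact Submodule.smul_mem _ _ (hQW 0 (by norm_num))
  have hsmulW : ∀ (r : ℝ) (v : Polynomial ℝ), v ∈ W → C r * v ∈ W := by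
    intro r v hv
    rw [← Polynomial.smul_eq_C_mul]
    exact Submodule.smul_mem _ _ hv
  have hXQ4 : (X * Qf (p+4) : Polynomial ℝ) ∈ W := by
    have hx : X * Qf (p+4) = Qf (p+5) + C (a' (p+5)) * Qf (p+4) + C (b' (p+5)) * Qf (p+3)
        - C (c (p+5)) := by linear_combination -hH5
    rw [hx]
    exact sub_mem (add_mem (add_mem (hQW _ (by omega)) (hsmulW _ _ (hQW _ (by omega))))
      (hsmulW _ _ (hQW _ (by omega)))) (hCW _)
  have hXQ3 : (X * Qf (p+3) : Polynomial ℝ) ∈ W := by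
    have hx : X * Qf (p+3) = Qf (p+4) + C (a' (p+4)) * Qf (p+3) + C (b' (p+4)) * Qf (p+2)
        - C (c (p+4)) := by linear_combination -hH4
    rw [hx]
    exact sub_mem (add_mem (add_mem (hQW _ (by omega)) (hsmulW _ _ (hQW _ (by omega))))
      (hsmulW _ _ (hQW _ (by omega)))) (hCW _)
  have hmem : C (gammaAW q (p+5) * c (p+5)) * X ∈ W := by
    rw [key]
    exact add_mem (add_mem (add_mem (add_mem (add_mem (hsmulW _ _ hXQ4)
      (hsmulW _ _ (hQW _ (by omega)))) (hsmulW _ _ hXQ3))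
      (hsmulW _ _ (hQW _ (by omega)))) (hsmulW _ _ (hQW _ (by omega)))) (hCW _)
  have hne : gammaAW q (p+5) * c (p+5) ≠ 0 :=
    mul_ne_zero (AWAux.gammaAW_ne hq0 hq1 _ (by omega)) hc5
  have hX : (X : Polynomial ℝ) ∈ W := by
    rw [← Polynomial.smul_eq_C_mul] at hmem
    have h2 := Submodule.smul_mem W (gammaAW q (p+5) * c (p+5))⁻¹ hmem
    rwa [smul_smul, inv_mul_cancel₀ hne, one_smul] at h2
  have hQ1eq : Qf 1 = X + C ((Qf 1).coeff 0) := by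
    have h1 := (hQmono 1).2
    have h2 := Polynomial.eq_X_add_C_of_natDegree_le_one (le_of_eq h1)
    have hc1 : (Qf 1).coeff 1 = 1 := by
      have h3 := (hQmono 1).1.coeff_natDegree
      rwa [h1] at h3
    conv_lhs => rw [h2]
    rw [hc1, Polynomial.C_1, one_mul]
  have hQ1W : Qf 1 ∈ W := by
    rw [hQ1eq]
    exact add_mem hX (hCW _)
  have hnot := (AWAux.lin_indep Qf hQmono).notMem_span_image
    (s := {j | j ≠ 1}) (x := 1) (by simp)
  rw [hW] at hQ1W
  exact hnot hQ1W
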